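/- arXiv:math/9901039 — 3 statements merged into one kernel-verified Lean document; each statement's English description precedes it below -/
import Mathlib

section
/- For every integer n ≥ 3 and every integer l ≥ 1, the rational number 2^{⌊n/2⌋} · C(n+1, 2) · C(l+n, l−1) · 2(n−2) / ((l+1)(l+n−1)) is a positive integer, where C(·,·) denotes the binomial coefficient. -/
/-- For `n ≥ 3`, `l ≥ 1`, the multiplicity
`2^⌊n/2⌋ · C(n+1,2) · C(l+n, l-1) · 2(n-2) / ((l+1)(l+n-1))` of the first
eigenvalue series of the Rarita–Schwinger operator on `Sⁿ` is a positive
integer. -/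
theorem RS_multiplicity_first_series_is_posint (n l : ℕ) (hn : 3 ≤ n) (hl : 1 ≤ l) :
    ∃ m : ℤ, 0 < m ∧
      (2 : ℚ) ^ (n / 2) * ((n + 1).choose 2) * ((l + n).choose (l - 1)) *
          (2 * ((n : ℚ) - 2)) / (((l : ℚ) + 1) * ((l : ℚ) + (n : ℚ) - 1)) = m := by
  obtain ⟨a, rfl⟩ : ∃ a, n = a + 3 := ⟨n - 3, by omega⟩
  obtain ⟨b, rfl⟩ : ∃ b, l = b + 1 := ⟨l - 1, by omega⟩
  set c0 := (a + b + 2).choose b with hc0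
  set c1 := (a + b + 2).choose (b + 1) with hc1
  set c2 := (a + b + 2).choose (b + 2) with hc2
  set d1 := (a + b + 3).choose b with hd1
  set d2 := (a + b + 3).choose (b + 1) with hd2
  set e0 := (a + b + 4).choose b with he0
  set t := (a + 4).choose 2 with ht
  -- natural number relations
  have r1 : c1 * (b + 1) = c0 * (a + 2) := by
    have := Nat.choose_succ_right_eq (a + b + 2) b
    rwa [show a + b + 2 - b = a + 2 by omega] at this
  have r2 : c2 * (b + 2) = c1 * (a + 1) := by
    have := Nat.choose_succ_right_eq (a + b + 2) (b + 1)
    rwa [show a + b + 2 - (b + 1) = a + 1 by omega] at this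
  have r3 : (a + b + 3) * c0 = d2 * (b + 1) := by
    have := Nat.add_one_mul_choose_eq (a + b + 2) b
    simpa [Nat.succ_eq_add_one] using this
  have r5 : d1 * (a + b + 4) = e0 * (a + 4) := by
    have := Nat.choose_mul_succ_eq (a + b + 3) b
    rwa [show a + b + 3 + 1 = a + b + 4 by omega, show a + b + 4 - b = a + 4 by omega] at this
  have r4 : c0 * (a + b + 3) = d1 * (a + 3) := by
    have := Nat.choose_mul_succ_eq (a + b + 2) b
    rwa [show a + b + 2 + 1 = a + b + 3 by omega, show a + b + 3 - b = a + 3 by omega] at this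
  have r6 : t * 2 = (a + 4) * (a + 3) := by
    have h := Nat.add_one_mul_choose_eq (a + 3) 1
    simp only [Nat.succ_eq_add_one, Nat.choose_one_right, Nat.reduceAdd] at h
    rw [show a + 3 + 1 = a + 4 from by omega] at h
    rw [ht]; omega
  -- rational relations
  have Q1 : (c1 : ℚ) * ((b : ℚ) + 1) = (c0 : ℚ) * ((a : ℚ) + 2) := by exact_mod_cast r1
  have Q2 : (c2 : ℚ) * ((b : ℚ) + 2) = (c1 : ℚ) * ((a : ℚ) + 1) := by exact_mod_cast r2
  have Q3 : ((a : ℚ) + (b : ℚ) + 3) * (c0 : ℚ) = (d2 : ℚ) * ((b : ℚ) + 1) := by exact_mod_cast r3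
  have Q5 : (d1 : ℚ) * ((a : ℚ) + (b : ℚ) + 4) = (e0 : ℚ) * ((a : ℚ) + 4) := by exact_mod_cast r5
  have Q4 : (c0 : ℚ) * ((a : ℚ) + (b : ℚ) + 3) = (d1 : ℚ) * ((a : ℚ) + 3) := by exact_mod_cast r4
  have Q6 : (t : ℚ) * 2 = ((a : ℚ) + 4) * ((a : ℚ) + 3) := by exact_mod_cast r6
  have key : (t : ℚ) * (e0 : ℚ) * (2 * ((a : ℚ) + 1)) =
      (((a : ℚ) + 1) * (d2 : ℚ) - (c2 : ℚ)) * (((b : ℚ) + 2) * ((a : ℚ) + (b : ℚ) + 3)) := by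
    have E3 : (c2 : ℚ) * (((b : ℚ) + 1) * ((b : ℚ) + 2)) =
        (c0 : ℚ) * ((a : ℚ) + 2) * ((a : ℚ) + 1) := by
      linear_combination ((a : ℚ) + 1) * Q1 + ((b : ℚ) + 1) * Q2
    have E6 : (e0 : ℚ) * (((a : ℚ) + 3) * ((a : ℚ) + 4)) =
        (c0 : ℚ) * ((a : ℚ) + (b : ℚ) + 3) * ((a : ℚ) + (b : ℚ) + 4) := by
      linear_combination (-((a : ℚ) + 3)) * Q5 + (-((a : ℚ) + (b : ℚ) + 4)) * Q4
    have hb1 : ((b : ℚ) + 1) ≠ 0 := by positivity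
    have hb2 : ((b : ℚ) + 2) ≠ 0 := by positivity
    have ha3 : ((a : ℚ) + 3) ≠ 0 := by positivity
    have ha4 : ((a : ℚ) + 4) ≠ 0 := by positivity
    have hE3 : (c2 : ℚ) = (c0 : ℚ) * ((a : ℚ) + 2) * ((a : ℚ) + 1) /
        (((b : ℚ) + 1) * ((b : ℚ) + 2)) := by rw [eq_div_iff (by positivity)]; exact E3
    have hE4 : (d2 : ℚ) = ((a : ℚ) + (b : ℚ) + 3) * (c0 : ℚ) / ((b : ℚ) + 1) := by
      rw [eq_div_iff hb1]; linarith [Q3]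
    have hE6 : (e0 : ℚ) = (c0 : ℚ) * ((a : ℚ) + (b : ℚ) + 3) * ((a : ℚ) + (b : ℚ) + 4) /
        (((a : ℚ) + 3) * ((a : ℚ) + 4)) := by rw [eq_div_iff (by positivity)]; exact E6
    have hE7 : (t : ℚ) = ((a : ℚ) + 4) * ((a : ℚ) + 3) / 2 := by
      rw [eq_div_iff (by norm_num : (2 : ℚ) ≠ 0)]; linarith [Q6]
    rw [hE3, hE4, hE6, hE7]
    field_simp
    ring
  set M : ℤ := 2 ^ ((a + 3) / 2) * (((a : ℤ) + 1) * (d2 : ℤ) - (c2 : ℤ)) with hM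
  have hMQ : ((M : ℚ)) = 2 ^ ((a + 3) / 2) * (((a : ℚ) + 1) * (d2 : ℚ) - (c2 : ℚ)) := by
    push_cast [hM]; ring
  have hden : (((b + 1 : ℕ) : ℚ) + 1) * (((b + 1 : ℕ) : ℚ) + ((a + 3 : ℕ) : ℚ) - 1) ≠ 0 := by
    have h : (((b + 1 : ℕ) : ℚ) + 1) * (((b + 1 : ℕ) : ℚ) + ((a + 3 : ℕ) : ℚ) - 1) =
        ((b : ℚ) + 2) * ((a : ℚ) + (b : ℚ) + 3) := by push_cast; ring
    rw [h]; positivity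
  have hgoal : (2 : ℚ) ^ ((a + 3) / 2) * (((a + 3 + 1).choose 2 : ℚ)) *
      (((b + 1 + (a + 3)).choose (b + 1 - 1) : ℚ)) *
      (2 * (((a + 3 : ℕ) : ℚ) - 2)) /
      ((((b + 1 : ℕ) : ℚ) + 1) * (((b + 1 : ℕ) : ℚ) + ((a + 3 : ℕ) : ℚ) - 1)) = (M : ℚ) := by
    rw [div_eq_iff hden, hMQ, show a + 3 + 1 = a + 4 by omega,
      show b + 1 + (a + 3) = a + b + 4 by omega, show b + 1 - 1 = b by omega, ← ht, ← he0]
    push_cast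
    linear_combination ((2 : ℚ) ^ ((a + 3) / 2)) * key
  refine ⟨M, ?_, hgoal⟩
  have hnum : (0 : ℚ) < (2 : ℚ) ^ ((a + 3) / 2) * (((a + 3 + 1).choose 2 : ℚ)) *
      (((b + 1 + (a + 3)).choose (b + 1 - 1) : ℚ)) * (2 * (((a + 3 : ℕ) : ℚ) - 2)) := by
    have h1 : (0 : ℚ) < (((a + 3 + 1).choose 2 : ℚ)) := by
      exact_mod_cast Nat.choose_pos (show 2 ≤ a + 3 + 1 by omega)
    have h2 : (0 : ℚ) < (((b + 1 + (a + 3)).choose (b + 1 - 1) : ℚ)) := by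
      exact_mod_cast Nat.choose_pos (show b + 1 - 1 ≤ b + 1 + (a + 3) by omega)
    have h3 : 2 * (((a + 3 : ℕ) : ℚ) - 2) = 2 * ((a : ℚ) + 1) := by push_cast; ring
    rw [h3]
    have h4 : (0 : ℚ) < 2 * ((a : ℚ) + 1) := by positivity
    exact mul_pos (mul_pos (mul_pos (by positivity) h1) h2) h4
  have hdpos : (0 : ℚ) < (((b + 1 : ℕ) : ℚ) + 1) * (((b + 1 : ℕ) : ℚ) + ((a + 3 : ℕ) : ℚ) - 1) := by
    have h : (((b + 1 : ℕ) : ℚ) + 1) * (((b + 1 : ℕ) : ℚ) + ((a + 3 : ℕ) : ℚ) - 1) =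
        ((b : ℚ) + 2) * ((a : ℚ) + (b : ℚ) + 3) := by push_cast; ring
    rw [h]; positivity
  have hpos : (0 : ℚ) < (M : ℚ) := by rw [← hgoal]; exact div_pos hnum hdpos
  exact_mod_cast hpos
end

section
/- For every integer n ≥ 3 and every integer l ≥ 1, the rational number 2^{⌊n/2⌋} · (n+1) · C(l+n, l−1) · n / (l·(l+n)) is a positive integer. -/
/-!
Writing `l = k + 1`, the identity `(n + 1) n C(k+n+1, k) = (k + 1)(k + n + 1) C(k+n, k+1)`
cancels the denominator `l (l + n)`, so the multiplicity equals `2^⌊n/2⌋ C(k+n, k+1)`,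
which is positive as soon as `n ≥ 1`.
-/

theorem Nat.add_one_mul_mul_choose_eq (n k : ℕ) :
    (n + 1) * n * (k + n + 1).choose k = (k + 1) * (k + n + 1) * (k + n).choose (k + 1) := by
  have h₁ : (k + n).choose (k + 1) * (k + 1) = (k + n).choose k * n := by
    rw [Nat.choose_succ_right_eq, Nat.add_sub_cancel_left]
  have h₂ : (k + n + 1) * (k + n).choose k = (k + n + 1).choose (k + 1) * (k + 1) :=
    Nat.add_one_mul_choose_eq (k + n) k
  have h₃ : (k + n + 1).choose (k + 1) * (k + 1) = (k + n + 1).choose k * (n + 1) := by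
    rw [Nat.choose_succ_right_eq]; congr 1; omega
  grind

/-- For `n ≥ 3`, `l ≥ 1`, the multiplicity
`2^⌊n/2⌋ · (n+1) · C(l+n, l-1) · n / (l(l+n))` of the second eigenvalue series
of the Rarita–Schwinger operator on `Sⁿ` is a positive integer. -/
theorem RS_multiplicity_second_series_is_posint (n l : ℕ) (hn : 3 ≤ n) (hl : 1 ≤ l) :
    ∃ m : ℤ, 0 < m ∧
      (2 : ℚ) ^ (n / 2) * ((n : ℚ) + 1) * ((l + n).choose (l - 1)) *
          (n : ℚ) / ((l : ℚ) * ((l : ℚ) + (n : ℚ))) = m := by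
  obtain ⟨k, rfl⟩ : ∃ k, l = k + 1 := ⟨l - 1, by omega⟩
  refine ⟨2 ^ (n / 2) * (k + n).choose (k + 1), ?_, ?_⟩
  · have := Nat.choose_pos (show k + 1 ≤ k + n by omega)
    positivity
  · have key : ((n : ℚ) + 1) * n * (k + n + 1).choose k =
        ((k : ℚ) + 1) * (k + n + 1) * (k + n).choose (k + 1) := by
      exact_mod_cast Nat.add_one_mul_mul_choose_eq n k
    rw [Nat.add_sub_cancel, Nat.add_right_comm]
    push_cast
    field_simp
    linear_combination key
end

section
/- For all integers n and j with 0 < j < n/2, and every integer l ≥ 1, the rational number 2^{⌊n/2⌋} · C(n+1, j+1) · C(l+n, l−1) · (n−2j)(j+1) / ((l+j)(l+n−j)) is a positive integer. -/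
/-!
Since `n - 2j = (l + n - j) - (l + j)`, the fraction splits into two terms, and each is a
product of two binomial coefficients: both `(n + 1) C(n, j) C(l + n, l - 1) / (l + j)` and
`C(l - 1 + j, j) C(l + n, n - j)` equal `(l + n)! / (j! (n - j)! (l - 1)! (l + j))`. Hence the
multiplicity is `2^⌊n/2⌋ (C(l-1+j, j) C(l+n, n-j) - C(l-1+n-j, n-j) C(l+n, j))`, an integer,
and it is positive because every factor of the original expression is.
-/

open Nat

theorem Nat.add_add_one_mul_choose_mul_choose (a b k : ℕ) :
    (a + b + 1) * (a + b).choose a * (k + 1 + (a + b)).choose k =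
      (k + 1 + a) * (k + a).choose a * (k + 1 + (a + b)).choose b := by
  refine Nat.eq_of_mul_eq_mul_right (by positivity : 0 < a ! * b ! * k !) ?_
  have hab : (a + b).choose a * a ! * b ! = (a + b)! := by
    rw [choose_symm_add]; exact add_choose_mul_factorial_mul_factorial a b
  have habk : (k + 1 + (a + b)).choose k * (a + b + 1)! * k ! = (k + 1 + (a + b))! := by
    rw [show k + 1 + (a + b) = a + b + 1 + k by ring]
    exact add_choose_mul_factorial_mul_factorial (a + b + 1) k
  have hka : (k + a).choose a * k ! * a ! = (k + a)! := add_choose_mul_factorial_mul_factorial k a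
  have hkab : (k + 1 + (a + b)).choose b * (k + 1 + a)! * b ! = (k + 1 + (a + b))! := by
    rw [← add_assoc]; exact add_choose_mul_factorial_mul_factorial (k + 1 + a) b
  calc (a + b + 1) * (a + b).choose a * (k + 1 + (a + b)).choose k * (a ! * b ! * k !)
      = (k + 1 + (a + b)).choose k * ((a + b + 1) * ((a + b).choose a * a ! * b !)) * k ! := by
        ring
    _ = (k + 1 + (a + b))! := by rw [hab, ← factorial_succ, habk]
    _ = (k + 1 + a) * (k + a).choose a * (k + 1 + (a + b)).choose b * (a ! * b ! * k !) := by
      rw [← hkab, show k + 1 + a = k + a + 1 by ring, factorial_succ, ← hka]; ring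

theorem Nat.cast_add_add_one_mul_choose_mul_choose_div (a b k : ℕ) :
    ((a + b + 1) * (a + b).choose a * (k + 1 + (a + b)).choose k : ℚ) / (k + 1 + a) =
      (k + a).choose a * (k + 1 + (a + b)).choose b := by
  rw [div_eq_iff (by positivity)]
  exact_mod_cast (Nat.add_add_one_mul_choose_mul_choose a b k).trans (by ring)

theorem cast_choose_mul_choose_mul_sub_div_eq_sub (j d k : ℕ) :
    ((j + d + 1).choose (j + 1) * (k + 1 + (j + d)).choose k * ((d - j) * (j + 1)) : ℚ) /
        ((k + 1 + j) * (k + 1 + d)) =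
      (k + j).choose j * (k + 1 + (j + d)).choose d -
        (k + d).choose d * (k + 1 + (j + d)).choose j := by
  have hjd := Nat.cast_add_add_one_mul_choose_mul_choose_div j d k
  have hdj := Nat.cast_add_add_one_mul_choose_mul_choose_div d j k
  rw [add_comm d j, ← choose_symm_add] at hdj
  have hsucc : ((j + d + 1).choose (j + 1) : ℚ) = (j + d + 1) * (j + d).choose j / (j + 1) := by
    rw [eq_div_iff (by positivity)]; exact_mod_cast (add_one_mul_choose_eq (j + d) j).symm
  rw [← hjd, ← hdj, hsucc]
  field_simp
  ring

def higherSpinMultiplicity (n j l : ℕ) : ℚ :=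
  (2 : ℚ) ^ (n / 2) * ((n + 1).choose (j + 1)) * ((l + n).choose (l - 1)) *
    (((n : ℚ) - 2 * j) * ((j : ℚ) + 1)) / (((l : ℚ) + j) * ((l : ℚ) + (n : ℚ) - j))

theorem higherSpinMultiplicity_pos {n j l : ℕ} (hn : 2 * j < n) (hl : 0 < l) :
    0 < higherSpinMultiplicity n j l := by
  have hnj : (0 : ℚ) < n - 2 * j := sub_pos.mpr (by exact_mod_cast hn)
  have hlnj : (0 : ℚ) < l + n - j := by
    have : (j : ℚ) ≤ n := by exact_mod_cast (by omega : j ≤ n)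
    have : (0 : ℚ) < l := by exact_mod_cast hl
    linarith
  unfold higherSpinMultiplicity
  have hchoose₁ := choose_pos (by omega : j + 1 ≤ n + 1)
  have hchoose₂ := choose_pos (by omega : l - 1 ≤ l + n)
  exact div_pos (mul_pos (by positivity) (mul_pos hnj (by positivity)))
    (mul_pos (by positivity) hlnj)

theorem higherSpinMultiplicity_eq {n j l : ℕ} (hjn : j ≤ n) (hl : 1 ≤ l) :
    higherSpinMultiplicity n j l =
      ((2 ^ (n / 2) * ((l - 1 + j).choose j * (l + n).choose (n - j) -
        (l - 1 + (n - j)).choose (n - j) * (l + n).choose j) : ℤ) : ℚ) := by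
  obtain ⟨k, rfl⟩ : ∃ k, l = k + 1 := ⟨l - 1, by omega⟩
  obtain ⟨d, rfl⟩ : ∃ d, n = j + d := ⟨n - j, by omega⟩
  simp only [higherSpinMultiplicity, Nat.add_sub_cancel, Nat.add_sub_cancel_left]
  push_cast
  rw [← cast_choose_mul_choose_mul_sub_div_eq_sub]
  ring

theorem higher_spin_multiplicity_is_posint_general (n j l : ℕ)
    (hn : 2 * j < n) (hl : 1 ≤ l) :
    ∃ m : ℤ, 0 < m ∧
      (2 : ℚ) ^ (n / 2) * ((n + 1).choose (j + 1)) * ((l + n).choose (l - 1)) *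
          (((n : ℚ) - 2 * j) * ((j : ℚ) + 1)) /
          (((l : ℚ) + j) * ((l : ℚ) + (n : ℚ) - j)) = m := by
  have heq := higherSpinMultiplicity_eq (by omega : j ≤ n) hl
  have hpos := higherSpinMultiplicity_pos hn hl
  rw [heq] at hpos
  exact ⟨_, by exact_mod_cast hpos, heq⟩

/-- For integers `0 < j < n/2` and `l ≥ 1`, the multiplicity
`2^⌊n/2⌋ · C(n+1, j+1) · C(l+n, l-1) · (n-2j)(j+1) / ((l+j)(l+n-j))` of the
first eigenvalue series of the higher spin Dirac operator `D_{λⱼ}` on `Sⁿ`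
is a positive integer. -/
theorem higher_spin_multiplicity_is_posint (n j l : ℕ)
    (hj : 0 < j) (hn : 2 * j < n) (hl : 1 ≤ l) :
    ∃ m : ℤ, 0 < m ∧
      (2 : ℚ) ^ (n / 2) * ((n + 1).choose (j + 1)) * ((l + n).choose (l - 1)) *
          (((n : ℚ) - 2 * j) * ((j : ℚ) + 1)) /
          (((l : ℚ) + j) * ((l : ℚ) + (n : ℚ) - j)) = m :=
  higher_spin_multiplicity_is_posint_general n j l hn hl
end
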